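/- arXiv:0710.4847 — 2 statements merged into one kernel-verified Lean document; each statement's English description precedes it below -/
import Mathlib

section
/- If g:S^M→ℝ is a bounded concave function on the standard probability simplex S^M, then the function Tg is also bounded and concave on S^M. -/
open MeasureTheory Finset Filter
open scoped ENNReal

noncomputable section

/-- The analytic data of the change-diagnosis problem: a σ-finite reference measure `m`
on the observation space, probability densities `f₀, …, f_M`, the geometric parameter
`p ∈ (0,1)`, the prior `ν` on the change index, the delay cost `c > 0` and the
terminal-decision costs `a_{ij}` (with `a_{ii} = 0`). -/
structure DiagSetup (E : Type*) [MeasurableSpace E] (M : ℕ) : Type _ where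
  /-- σ-finite reference measure -/
  m : Measure E
  hm : SigmaFinite m
  /-- `f 0` is the pre-change density, `f i.succ` the post-change densities -/
  f : Fin (M + 1) → E → ℝ
  hf_meas : ∀ i, Measurable (f i)
  hf_nonneg : ∀ i x, 0 ≤ f i x
  hf_int : ∀ i, ∫ x, f i x ∂m = 1
  p : ℝ
  hp : p ∈ Set.Ioo (0 : ℝ) 1
  ν : Fin M → ℝ
  hν : ∀ i, 0 < ν i
  hνsum : ∑ i, ν i = 1
  c : ℝ
  hc : 0 < c
  a : Fin (M + 1) → Fin M → ℝ
  ha : ∀ i j, 0 ≤ a i j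
  haii : ∀ i : Fin M, a i.succ i = 0
  hM : 1 ≤ M

namespace DiagSetup

variable {E : Type*} [MeasurableSpace E] {M : ℕ}

/-- `D_i(π, x)`:  `D₀(π,x) = (1-p)π₀f₀(x)` and `D_i(π,x) = (π_i + π₀ p ν_i) f_i(x)`. -/
def D (S : DiagSetup E M) (i : Fin (M + 1)) (π : Fin (M + 1) → ℝ) (x : E) : ℝ :=
  Fin.cases ((1 - S.p) * π 0 * S.f 0 x)
    (fun j => (π j.succ + π 0 * S.p * S.ν j) * S.f j.succ x) i

/-- `D(π, x) = Σ_{i=0}^M D_i(π, x)`. -/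
def Dsum (S : DiagSetup E M) (π : Fin (M + 1) → ℝ) (x : E) : ℝ :=
  ∑ i, S.D i π x

/-- The operator `T`:
`(Tg)(π) = ∫_E D(π,x) g(D₀(π,x)/D(π,x), …, D_M(π,x)/D(π,x)) m(dx)`,
with the integrand interpreted as `0` where `D(π,x) = 0`. -/
def T (S : DiagSetup E M) (g : (Fin (M + 1) → ℝ) → ℝ) (π : Fin (M + 1) → ℝ) : ℝ :=
  ∫ x, (if S.Dsum π x = 0 then 0
        else S.Dsum π x * g fun i => S.D i π x / S.Dsum π x) ∂S.m

/-- `h_j(π) = Σ_{i=0}^M π_i a_{ij}`. -/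
def hj (S : DiagSetup E M) (j : Fin M) (π : Fin (M + 1) → ℝ) : ℝ :=
  ∑ i : Fin (M + 1), π i * S.a i j

/-- `h(π) = min_{j∈{1,…,M}} h_j(π)`. -/
def hmin (S : DiagSetup E M) (π : Fin (M + 1) → ℝ) : ℝ :=
  ⨅ j : Fin M, S.hj j π

/-- The dynamic-programming operator `(𝕄g)(π) = min{h(π), c(1-π₀) + (Tg)(π)}`. -/
def Mop (S : DiagSetup E M) (g : (Fin (M + 1) → ℝ) → ℝ) (π : Fin (M + 1) → ℝ) : ℝ :=
  min (S.hmin π) (S.c * (1 - π 0) + S.T g π)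

/-- `V^N = 𝕄^N h`, the value functions of the truncated problems. -/
def V (S : DiagSetup E M) (N : ℕ) : (Fin (M + 1) → ℝ) → ℝ :=
  S.Mop^[N] S.hmin

end DiagSetup

/-!
The integrand of `T g` at `π` is the perspective `v ↦ (∑ᵢ vᵢ) g(v / ∑ᵢ vᵢ)` of `g`, evaluated at
the vector `(D₀(π,x), …, D_M(π,x))`, which depends linearly on `π`. The perspective of a concave
function is positively homogeneous and superadditive on the nonnegative orthant, hence concave
there; so the integrand is concave in `π` for every `x`, and integration preserves concavity.
For boundedness, `|g| ≤ C` bounds the integrand by `C D(π,x)`, whose integral is `C ∑ᵢ πᵢ = C`.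
-/

section Perspective

variable {ι : Type*} [Fintype ι]

def simplexPerspective (g : (ι → ℝ) → ℝ) (v : ι → ℝ) : ℝ :=
  if ∑ i, v i = 0 then 0 else (∑ i, v i) * g fun i => v i / ∑ j, v j

lemma div_sum_mem_stdSimplex {v : ι → ℝ} (hv : 0 ≤ v) (hsum : ∑ i, v i ≠ 0) :
    (fun i => v i / ∑ j, v j) ∈ stdSimplex ℝ ι :=
  ⟨fun i => div_nonneg (hv i) (Fintype.sum_nonneg hv), by rw [← Finset.sum_div, div_self hsum]⟩

@[simp]
lemma simplexPerspective_zero (g : (ι → ℝ) → ℝ) : simplexPerspective g 0 = 0 := by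
  simp [simplexPerspective]

lemma simplexPerspective_of_sum_ne_zero (g : (ι → ℝ) → ℝ) {v : ι → ℝ} (h : ∑ i, v i ≠ 0) :
    simplexPerspective g v = (∑ i, v i) * g fun i => v i / ∑ j, v j :=
  if_neg h

lemma simplexPerspective_smul (g : (ι → ℝ) → ℝ) (t : ℝ) (v : ι → ℝ) :
    simplexPerspective g (t • v) = t * simplexPerspective g v := by
  rcases eq_or_ne t 0 with rfl | ht
  · simp
  have hsum : ∑ i, (t • v) i = t * ∑ i, v i := by
    simp only [Pi.smul_apply, smul_eq_mul, Finset.mul_sum]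
  by_cases hv : ∑ i, v i = 0
  · rw [simplexPerspective, simplexPerspective, if_pos (by rw [hsum, hv, mul_zero]), if_pos hv,
      mul_zero]
  rw [simplexPerspective_of_sum_ne_zero g (by rw [hsum]; exact mul_ne_zero ht hv),
    simplexPerspective_of_sum_ne_zero g hv, hsum, mul_assoc]
  simp only [Pi.smul_apply, smul_eq_mul, mul_div_mul_left _ _ ht]

lemma simplexPerspective_add_simplexPerspective_le {g : (ι → ℝ) → ℝ}
    (hg : ConcaveOn ℝ (stdSimplex ℝ ι) g) {u v : ι → ℝ} (hu : 0 ≤ u) (hv : 0 ≤ v) :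
    simplexPerspective g u + simplexPerspective g v ≤ simplexPerspective g (u + v) := by
  by_cases hu0 : ∑ i, u i = 0
  · rw [(Fintype.sum_eq_zero_iff_of_nonneg hu).1 hu0]
    simp
  by_cases hv0 : ∑ i, v i = 0
  · rw [(Fintype.sum_eq_zero_iff_of_nonneg hv).1 hv0]
    simp
  have hs : 0 < ∑ i, u i := (Fintype.sum_nonneg hu).lt_of_ne' hu0
  have ht : 0 < ∑ i, v i := (Fintype.sum_nonneg hv).lt_of_ne' hv0
  have hsum : ∑ i, (u + v) i = ∑ i, u i + ∑ i, v i := Finset.sum_add_distrib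
  have hconc := hg.2 (div_sum_mem_stdSimplex hu hu0) (div_sum_mem_stdSimplex hv hv0)
    (div_nonneg hs.le (add_pos hs ht).le) (div_nonneg ht.le (add_pos hs ht).le)
    (by rw [← add_div, div_self (add_pos hs ht).ne'])
  rw [simplexPerspective_of_sum_ne_zero g hu0, simplexPerspective_of_sum_ne_zero g hv0,
    simplexPerspective_of_sum_ne_zero g (hsum ▸ (add_pos hs ht).ne'), hsum]
  set s := ∑ i, u i
  set t := ∑ i, v i
  have hmix : (s / (s + t)) • (fun i => u i / s) + (t / (s + t)) • (fun i => v i / t) =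
      fun i => (u + v) i / (s + t) := by
    ext i
    simp only [Pi.add_apply, Pi.smul_apply, smul_eq_mul]
    field_simp
  rw [hmix] at hconc
  calc s * g (fun i => u i / s) + t * g (fun i => v i / t)
      = (s + t) *
          ((s / (s + t)) • g (fun i => u i / s) + (t / (s + t)) • g (fun i => v i / t)) := by
        simp only [smul_eq_mul]
        field_simp
    _ ≤ _ := mul_le_mul_of_nonneg_left hconc (add_pos hs ht).le

lemma concaveOn_simplexPerspective {g : (ι → ℝ) → ℝ} (hg : ConcaveOn ℝ (stdSimplex ℝ ι) g) :
    ConcaveOn ℝ (Set.Ici 0) (simplexPerspective g) := by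
  refine ⟨convex_Ici 0, fun u hu v hv a b ha hb _ => ?_⟩
  calc a • simplexPerspective g u + b • simplexPerspective g v
      = simplexPerspective g (a • u) + simplexPerspective g (b • v) := by
        simp only [simplexPerspective_smul, smul_eq_mul]
    _ ≤ simplexPerspective g (a • u + b • v) :=
        simplexPerspective_add_simplexPerspective_le hg (smul_nonneg ha hu) (smul_nonneg hb hv)

lemma abs_simplexPerspective_le {g : (ι → ℝ) → ℝ} {C : ℝ}
    (hC : ∀ π ∈ stdSimplex ℝ ι, |g π| ≤ C) {v : ι → ℝ} (hv : 0 ≤ v) :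
    |simplexPerspective g v| ≤ C * ∑ i, v i := by
  unfold simplexPerspective
  split_ifs with h
  · simp [h]
  · rw [abs_mul, abs_of_nonneg (Fintype.sum_nonneg hv), mul_comm]
    exact mul_le_mul_of_nonneg_right (hC _ (div_sum_mem_stdSimplex hv h)) (Fintype.sum_nonneg hv)

lemma Measurable.simplexPerspective {g : (ι → ℝ) → ℝ} (hg : Measurable g) :
    Measurable (simplexPerspective g) := by
  have hsum : Measurable fun v : ι → ℝ => ∑ i, v i :=
    Finset.measurable_sum _ fun i _ => measurable_pi_apply i
  exact Measurable.ite (measurableSet_eq_fun hsum measurable_const) measurable_const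
    (hsum.mul (hg.comp (measurable_pi_lambda _ fun i => (measurable_pi_apply i).div hsum)))

end Perspective

lemma concaveOn_integral {V X : Type*} [AddCommGroup V] [Module ℝ V] [MeasurableSpace X]
    {μ : Measure X} {s : Set V} (hs : Convex ℝ s) {F : V → X → ℝ}
    (hF : ∀ x, ConcaveOn ℝ s fun v => F v x) (hint : ∀ v ∈ s, Integrable (F v) μ) :
    ConcaveOn ℝ s fun v => ∫ x, F v x ∂μ := by
  refine ⟨hs, fun u hu v hv a b ha hb hab => ?_⟩
  calc a • ∫ x, F u x ∂μ + b • ∫ x, F v x ∂μ = ∫ x, a • F u x + b • F v x ∂μ := by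
        rw [← integral_smul, ← integral_smul]
        exact (integral_add ((hint u hu).smul a) ((hint v hv).smul b)).symm
    _ ≤ ∫ x, F (a • u + b • v) x ∂μ :=
        integral_mono (((hint u hu).smul a).add ((hint v hv).smul b))
          (hint _ (hs hu hv ha hb hab)) fun x => (hF x).2 hu hv ha hb hab

namespace DiagSetup

variable {E : Type*} [MeasurableSpace E] {M : ℕ} (S : DiagSetup E M)

def DLinearMap (x : E) : (Fin (M + 1) → ℝ) →ₗ[ℝ] Fin (M + 1) → ℝ where
  toFun π i := S.D i π x
  map_add' π π' := by
    ext i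
    cases i using Fin.cases <;>
      simp only [D, Fin.cases_zero, Fin.cases_succ, Pi.add_apply] <;>
      ring
  map_smul' t π := by
    ext i
    cases i using Fin.cases <;>
      simp only [D, Fin.cases_zero, Fin.cases_succ, Pi.smul_apply, smul_eq_mul,
        RingHom.id_apply] <;>
      ring

lemma T_eq_integral_simplexPerspective (g : (Fin (M + 1) → ℝ) → ℝ) :
    S.T g = fun π => ∫ x, simplexPerspective g (S.DLinearMap x π) ∂S.m :=
  rfl

lemma DLinearMap_nonneg {π : Fin (M + 1) → ℝ} (hπ : 0 ≤ π) (x : E) : 0 ≤ S.DLinearMap x π := by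
  intro i
  have hp := S.hp
  cases i using Fin.cases with
  | zero => exact mul_nonneg (mul_nonneg (by linarith [hp.2]) (hπ 0)) (S.hf_nonneg 0 x)
  | succ j =>
    exact mul_nonneg
      (add_nonneg (hπ j.succ) (mul_nonneg (mul_nonneg (hπ 0) hp.1.le) (S.hν j).le))
      (S.hf_nonneg j.succ x)

lemma measurable_DLinearMap_apply (π : Fin (M + 1) → ℝ) :
    Measurable fun x => S.DLinearMap x π :=
  measurable_pi_lambda _ fun i => by
    cases i using Fin.cases <;> exact (S.hf_meas _).const_mul _

lemma integrable_f (i : Fin (M + 1)) : Integrable (S.f i) S.m :=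
  Integrable.of_integral_ne_zero (by rw [S.hf_int i]; exact one_ne_zero)

lemma integrable_D (i : Fin (M + 1)) (π : Fin (M + 1) → ℝ) : Integrable (S.D i π) S.m := by
  cases i using Fin.cases <;> exact (S.integrable_f _).const_mul _

lemma integrable_Dsum (π : Fin (M + 1) → ℝ) : Integrable (S.Dsum π) S.m :=
  integrable_finsetSum _ fun i _ => S.integrable_D i π

lemma integral_Dsum {π : Fin (M + 1) → ℝ} (hπ : ∑ i, π i = 1) : ∫ x, S.Dsum π x ∂S.m = 1 := by
  have hD : ∀ i, ∫ x, S.D i π x ∂S.m =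
      Fin.cases ((1 - S.p) * π 0) (fun j => π j.succ + π 0 * S.p * S.ν j) i := by
    intro i
    cases i using Fin.cases <;> simp [D, integral_const_mul, S.hf_int]
  unfold Dsum
  rw [integral_finsetSum _ fun i _ => S.integrable_D i π, ← hπ]
  simp only [hD, Fin.sum_univ_succ (f := π), Fin.sum_univ_succ, Fin.cases_zero, Fin.cases_succ,
    sum_add_distrib, ← mul_sum, S.hνsum]
  ring

end DiagSetup

/-- if `g : S^M → ℝ` is bounded and concave on the standard probability
simplex, then so is `Tg`. -/
theorem T_preserves_bounded_concave {E : Type*} [MeasurableSpace E] {M : ℕ}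
    (S : DiagSetup E M) (g : (Fin (M + 1) → ℝ) → ℝ) (hg_meas : Measurable g)
    (hg_bdd : ∃ C, ∀ π ∈ stdSimplex ℝ (Fin (M + 1)), |g π| ≤ C)
    (hg_concave : ConcaveOn ℝ (stdSimplex ℝ (Fin (M + 1))) g) :
    (∃ C, ∀ π ∈ stdSimplex ℝ (Fin (M + 1)), |S.T g π| ≤ C) ∧
    ConcaveOn ℝ (stdSimplex ℝ (Fin (M + 1))) (S.T g) := by
  obtain ⟨C, hC⟩ := hg_bdd
  have hbound : ∀ π ∈ stdSimplex ℝ (Fin (M + 1)), ∀ x,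
      ‖simplexPerspective g (S.DLinearMap x π)‖ ≤ C * S.Dsum π x := fun π hπ x =>
    abs_simplexPerspective_le hC (S.DLinearMap_nonneg hπ.1 x)
  have hint : ∀ π ∈ stdSimplex ℝ (Fin (M + 1)),
      Integrable (fun x => simplexPerspective g (S.DLinearMap x π)) S.m := fun π hπ =>
    ((S.integrable_Dsum π).const_mul C).mono'
      (hg_meas.simplexPerspective.comp (S.measurable_DLinearMap_apply π)).aestronglyMeasurable
      (ae_of_all _ (hbound π hπ))
  simp only [S.T_eq_integral_simplexPerspective]
  refine ⟨⟨C, fun π hπ => ?_⟩, ?_⟩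
  · calc |∫ x, simplexPerspective g (S.DLinearMap x π) ∂S.m| ≤ ∫ x, C * S.Dsum π x ∂S.m :=
          norm_integral_le_of_norm_le ((S.integrable_Dsum π).const_mul C)
            (ae_of_all _ (hbound π hπ))
      _ = C := by rw [integral_const_mul, S.integral_Dsum hπ.2, mul_one]
  · exact concaveOn_integral (convex_stdSimplex ℝ _)
      (fun x => ((concaveOn_simplexPerspective hg_concave).comp_linearMap (S.DLinearMap x)).subset
        (fun π hπ => S.DLinearMap_nonneg hπ.1 x) (convex_stdSimplex ℝ _)) hint
end
end

section
/- The function V₀, defined as the pointwise limit of 𝕄^N h as N→∞, satisfies the optimality equation: for every π=(π₀,…,π_M)∈S^M, V₀(π) = (𝕄V₀)(π) = min{ h(π), c(1−π₀) + (TV₀)(π) }. -/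
open MeasureTheory Finset Filter
open scoped ENNReal

noncomputable section

/-! The recursion `V^{N+1} = 𝕄 V^N` passes to the limit. The posterior `(D_i/D)_i` stays in the
simplex, where every `V^N` lies between `0` and `Σ_{i,j} a_{ij}`; so the integrands of
`T V^N` are dominated by a multiple of `D(π, ·)`, which is integrable because the `f_i` are
densities, and dominated convergence gives `T V^N → T V₀`. -/

namespace DiagSetup

variable {E : Type*} [MeasurableSpace E] {M : ℕ} (S : DiagSetup E M)

lemma D_zero (π : Fin (M + 1) → ℝ) (x : E) : S.D 0 π x = (1 - S.p) * π 0 * S.f 0 x := rfl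

lemma D_succ (j : Fin M) (π : Fin (M + 1) → ℝ) (x : E) :
    S.D j.succ π x = (π j.succ + π 0 * S.p * S.ν j) * S.f j.succ x := rfl

lemma measurable_D (i : Fin (M + 1)) :
    Measurable fun q : (Fin (M + 1) → ℝ) × E => S.D i q.1 q.2 := by
  have hf := S.hf_meas
  induction i using Fin.cases with
  | zero => simp only [D_zero]; fun_prop
  | succ j => simp only [D_succ]; fun_prop

lemma measurable_Dsum : Measurable fun q : (Fin (M + 1) → ℝ) × E => S.Dsum q.1 q.2 :=
  Finset.measurable_sum _ fun i _ => S.measurable_D i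

lemma D_nonneg {π : Fin (M + 1) → ℝ} (hπ : π ∈ stdSimplex ℝ (Fin (M + 1)))
    (i : Fin (M + 1)) (x : E) : 0 ≤ S.D i π x := by
  have hp := S.hp
  induction i using Fin.cases with
  | zero =>
    exact mul_nonneg (mul_nonneg (by linarith [hp.2]) (hπ.1 0)) (S.hf_nonneg 0 x)
  | succ j =>
    exact mul_nonneg (add_nonneg (hπ.1 j.succ)
      (mul_nonneg (mul_nonneg (hπ.1 0) hp.1.le) (S.hν j).le)) (S.hf_nonneg j.succ x)

lemma Dsum_nonneg {π : Fin (M + 1) → ℝ} (hπ : π ∈ stdSimplex ℝ (Fin (M + 1))) (x : E) :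
    0 ≤ S.Dsum π x :=
  Finset.sum_nonneg fun i _ => S.D_nonneg hπ i x

lemma div_Dsum_mem_stdSimplex {π : Fin (M + 1) → ℝ} (hπ : π ∈ stdSimplex ℝ (Fin (M + 1)))
    {x : E} (hx : S.Dsum π x ≠ 0) :
    (fun i => S.D i π x / S.Dsum π x) ∈ stdSimplex ℝ (Fin (M + 1)) := by
  have hpos : 0 < S.Dsum π x := (S.Dsum_nonneg hπ x).lt_of_ne' hx
  refine ⟨fun i => div_nonneg (S.D_nonneg hπ i x) hpos.le, ?_⟩
  rw [← Finset.sum_div]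
  exact div_self hx

lemma measurable_T_integrand {g : (Fin (M + 1) → ℝ) → ℝ} (hg : Measurable g) :
    Measurable fun q : (Fin (M + 1) → ℝ) × E =>
      if S.Dsum q.1 q.2 = 0 then 0
      else S.Dsum q.1 q.2 * g fun i => S.D i q.1 q.2 / S.Dsum q.1 q.2 :=
  Measurable.ite (S.measurable_Dsum (measurableSet_singleton 0)) measurable_const
    (S.measurable_Dsum.mul (hg.comp (measurable_pi_lambda _ fun i =>
      (S.measurable_D i).div S.measurable_Dsum)))

lemma measurable_T {g : (Fin (M + 1) → ℝ) → ℝ} (hg : Measurable g) : Measurable (S.T g) := by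
  have := S.hm
  exact (S.measurable_T_integrand hg).stronglyMeasurable.integral_prod_right'.measurable

lemma measurable_hmin : Measurable S.hmin :=
  Measurable.iInf fun _ => Finset.measurable_sum _ fun i _ => (measurable_pi_apply i).mul_const _

lemma measurable_Mop {g : (Fin (M + 1) → ℝ) → ℝ} (hg : Measurable g) :
    Measurable (S.Mop g) :=
  S.measurable_hmin.min ((measurable_const.mul
    (measurable_const.sub (measurable_pi_apply 0))).add (S.measurable_T hg))

lemma V_succ (N : ℕ) : S.V (N + 1) = S.Mop (S.V N) :=
  Function.iterate_succ_apply' _ _ _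

lemma measurable_V (N : ℕ) : Measurable (S.V N) := by
  induction N with
  | zero => exact S.measurable_hmin
  | succ N ih => rw [V_succ]; exact S.measurable_Mop ih

def costBound : ℝ := ∑ i : Fin (M + 1), ∑ j : Fin M, S.a i j

lemma hmin_nonneg {π : Fin (M + 1) → ℝ} (hπ : π ∈ stdSimplex ℝ (Fin (M + 1))) :
    0 ≤ S.hmin π :=
  Real.iInf_nonneg fun j => Finset.sum_nonneg fun i _ => mul_nonneg (hπ.1 i) (S.ha i j)

lemma hmin_le_costBound {π : Fin (M + 1) → ℝ} (hπ : π ∈ stdSimplex ℝ (Fin (M + 1))) :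
    S.hmin π ≤ S.costBound := by
  let j₀ : Fin M := ⟨0, S.hM⟩
  calc S.hmin π ≤ S.hj j₀ π := ciInf_le (Set.finite_range _).bddBelow j₀
    _ ≤ ∑ i, S.a i j₀ := Finset.sum_le_sum fun i _ =>
        mul_le_of_le_one_left (S.ha i j₀) (mem_Icc_of_mem_stdSimplex hπ i).2
    _ ≤ S.costBound := Finset.sum_le_sum fun i _ =>
        Finset.single_le_sum (fun j _ => S.ha i j) (Finset.mem_univ j₀)

lemma T_nonneg {g : (Fin (M + 1) → ℝ) → ℝ} (hg : ∀ ρ ∈ stdSimplex ℝ (Fin (M + 1)), 0 ≤ g ρ)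
    {π : Fin (M + 1) → ℝ} (hπ : π ∈ stdSimplex ℝ (Fin (M + 1))) : 0 ≤ S.T g π := by
  refine integral_nonneg fun x => ?_
  dsimp only
  split_ifs with h
  · exact le_rfl
  · exact mul_nonneg (S.Dsum_nonneg hπ x) (hg _ (S.div_Dsum_mem_stdSimplex hπ h))

lemma V_mem_Icc (N : ℕ) {π : Fin (M + 1) → ℝ} (hπ : π ∈ stdSimplex ℝ (Fin (M + 1))) :
    S.V N π ∈ Set.Icc 0 S.costBound := by
  induction N generalizing π with
  | zero => exact ⟨S.hmin_nonneg hπ, S.hmin_le_costBound hπ⟩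
  | succ N ih =>
    rw [V_succ]
    refine ⟨le_min (S.hmin_nonneg hπ) (add_nonneg (mul_nonneg S.hc.le ?_) ?_),
      (min_le_left _ _).trans (S.hmin_le_costBound hπ)⟩
    · linarith [(mem_Icc_of_mem_stdSimplex hπ 0).2]
    · exact S.T_nonneg (fun ρ hρ => (ih hρ).1) hπ

lemma abs_V_le (N : ℕ) {π : Fin (M + 1) → ℝ} (hπ : π ∈ stdSimplex ℝ (Fin (M + 1))) :
    |S.V N π| ≤ S.costBound :=
  abs_le.2 ⟨by linarith [(S.V_mem_Icc N hπ).1, (S.V_mem_Icc N hπ).2], (S.V_mem_Icc N hπ).2⟩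

theorem tendsto_T_of_tendsto {g : ℕ → (Fin (M + 1) → ℝ) → ℝ} {g₀ : (Fin (M + 1) → ℝ) → ℝ}
    (hg_meas : ∀ N, Measurable (g N)) {B : ℝ}
    (hg_bound : ∀ N, ∀ ρ ∈ stdSimplex ℝ (Fin (M + 1)), |g N ρ| ≤ B)
    (hg : ∀ ρ ∈ stdSimplex ℝ (Fin (M + 1)), Tendsto (fun N => g N ρ) atTop (nhds (g₀ ρ)))
    {π : Fin (M + 1) → ℝ} (hπ : π ∈ stdSimplex ℝ (Fin (M + 1))) :
    Tendsto (fun N => S.T (g N) π) atTop (nhds (S.T g₀ π)) := by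
  refine tendsto_integral_of_dominated_convergence (fun x => B * S.Dsum π x)
    (fun N => ((S.measurable_T_integrand (hg_meas N)).comp measurable_prodMk_left).aestronglyMeasurable) ?_ ?_ ?_
  · exact (S.integrable_Dsum π).const_mul B
  · refine fun N => Eventually.of_forall fun x => ?_
    split_ifs with h
    · simpa using mul_nonneg ((abs_nonneg _).trans (hg_bound 0 π hπ)) (S.Dsum_nonneg hπ x)
    · rw [norm_mul, Real.norm_of_nonneg (S.Dsum_nonneg hπ x), mul_comm]
      exact mul_le_mul_of_nonneg_right (hg_bound N _ (S.div_Dsum_mem_stdSimplex hπ h))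
        (S.Dsum_nonneg hπ x)
  · refine Eventually.of_forall fun x => ?_
    split_ifs with h
    · exact tendsto_const_nhds
    · exact tendsto_const_nhds.mul (hg _ (S.div_Dsum_mem_stdSimplex hπ h))

end DiagSetup

theorem optimality_equation_general {E : Type*} [MeasurableSpace E] {M : ℕ}
    (S : DiagSetup E M) (V0 : (Fin (M + 1) → ℝ) → ℝ)
    (hV0 : ∀ π ∈ stdSimplex ℝ (Fin (M + 1)),
      Tendsto (fun N => S.V N π) atTop (nhds (V0 π))) :
    ∀ π ∈ stdSimplex ℝ (Fin (M + 1)),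
      V0 π = S.Mop V0 π ∧ V0 π = min (S.hmin π) (S.c * (1 - π 0) + S.T V0 π) := by
  intro π hπ
  have hT := S.tendsto_T_of_tendsto S.measurable_V (fun N _ => S.abs_V_le N) hV0 hπ
  have hMop : Tendsto (fun N => S.V (N + 1) π) atTop (nhds (S.Mop V0 π)) := by
    simp only [DiagSetup.V_succ]
    exact tendsto_const_nhds.min (tendsto_const_nhds.add hT)
  have h := tendsto_nhds_unique ((hV0 π hπ).comp (tendsto_add_atTop_nat 1)) hMop
  exact ⟨h, h⟩

/-- optimality equation: the limit value function `V₀ = lim_N 𝕄^N h`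
satisfies `V₀(π) = (𝕄V₀)(π) = min{h(π), c(1-π₀) + (TV₀)(π)}` for every `π ∈ S^M`. -/
theorem optimality_equation {E : Type*} [MeasurableSpace E] {M : ℕ}
    (S : DiagSetup E M) (V0 : (Fin (M + 1) → ℝ) → ℝ) (hV0_meas : Measurable V0)
    (hV0 : ∀ π ∈ stdSimplex ℝ (Fin (M + 1)),
      Tendsto (fun N => S.V N π) atTop (nhds (V0 π))) :
    ∀ π ∈ stdSimplex ℝ (Fin (M + 1)),
      V0 π = S.Mop V0 π ∧ V0 π = min (S.hmin π) (S.c * (1 - π 0) + S.T V0 π) :=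
  optimality_equation_general S V0 hV0
end
end
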